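/- arXiv:1510.02423 — 11 statements merged into one kernel-verified Lean document; each statement's English description precedes it below -/
import Mathlib

section
/- The representation of ℤ on D (with the generator 1 acting by the shift U) contains no irreducible subrepresentations: there is no nonzero ℂ-subspace W ⊆ D with U(W) = W such that the only subspaces W' ⊆ W with U(W') = W' are W' = 0 and W' = W. -/
/-!
`U - 1` commutes with `U` and is injective on sequences vanishing at `-∞`, so for an
irreducible `W ⊆ D` the image `(U - 1) W` is a nonzero `U`-stable subspace of `W`, hence equals
`W`. Elements of `D` are eventually constant, so `(U - 1) W = W` consists of finitely supported
sequences. But `U - 1` lengthens the support of a finitely supported sequence by one, so by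
induction on the length of the support no nonzero element of `W` is finitely supported.
-/

/-- The space `D`: sequences `ℤ → ℂ` vanishing for all sufficiently small indices and
constant for all sufficiently large indices (the model of `D(L)^{O_L^*}`). -/
noncomputable def Dspace : Submodule ℂ (ℤ → ℂ) where
  carrier := {c | (∃ N : ℤ, ∀ n < N, c n = 0) ∧ ∃ e : ℂ, ∃ M : ℤ, ∀ n ≥ M, c n = e}
  add_mem' := by
    rintro a b ⟨⟨N₁, h₁⟩, e₁, M₁, k₁⟩ ⟨⟨N₂, h₂⟩, e₂, M₂, k₂⟩
    refine ⟨⟨min N₁ N₂, fun n hn => ?_⟩, e₁ + e₂, max M₁ M₂, fun n hn => ?_⟩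
    · have ha := h₁ n (lt_of_lt_of_le hn (min_le_left _ _))
      have hb := h₂ n (lt_of_lt_of_le hn (min_le_right _ _))
      simp [Pi.add_apply, ha, hb]
    · have ha := k₁ n (le_trans (le_max_left _ _) hn)
      have hb := k₂ n (le_trans (le_max_right _ _) hn)
      simp [Pi.add_apply, ha, hb]
  zero_mem' := ⟨⟨0, fun _ _ => rfl⟩, 0, 0, fun _ _ => rfl⟩
  smul_mem' := by
    rintro s a ⟨⟨N, h⟩, e, M, k⟩
    refine ⟨⟨N, fun n hn => ?_⟩, s * e, M, fun n hn => ?_⟩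
    · simp [Pi.smul_apply, h n hn]
    · simp [Pi.smul_apply, k n hn]

/-- The shift operator `U`, `(Uc)_n = c_{n−1}`, as a ℂ-linear endomorphism of `ℤ → ℂ`. -/
def shiftU : (ℤ → ℂ) →ₗ[ℂ] (ℤ → ℂ) where
  toFun c := fun n => c (n - 1)
  map_add' := fun _ _ => rfl
  map_smul' := fun _ _ => rfl

open Function Set

theorem eq_zero_of_lt_of_shift_eq {α : Type*} [Zero α] {f : ℤ → α} {N a : ℤ}
    (hN : ∀ n < N, f n = 0) (h : ∀ n < a, f (n - 1) = f n) : ∀ n < a, f n = 0 := by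
  intro n hna
  rcases lt_or_ge n N with hnN | hNn
  · exact hN n hnN
  induction n, hNn using Int.leInduction with
  | base => rw [← h N hna]; exact hN _ (sub_one_lt N)
  | succ n _ ih => rw [← h (n + 1) hna, add_sub_cancel_right]; exact ih (by omega)

theorem eq_zero_of_ge_of_shift_eq {α : Type*} [Zero α] {f : ℤ → α} {M b : ℤ}
    (hM : ∀ n ≥ M, f n = 0) (h : ∀ n > b, f (n - 1) = f n) : ∀ n ≥ b, f n = 0 := by
  intro n hbn
  rcases le_or_gt M n with hMn | hnM
  · exact hM n hMn
  replace hnM := hnM.le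
  induction n, hnM using Int.leInductionDown with
  | base => exact hM M le_rfl
  | pred n _ ih => rw [h n (by omega)]; exact ih (by omega)

theorem Submodule.map_map_eq_of_commute {R M : Type*} [Semiring R] [AddCommMonoid M]
    [Module R M] {f g : Module.End R M} (hfg : Commute f g) {W : Submodule R M} (hW : W.map f = W) :
    (W.map g).map f = W.map g := by
  rw [← Submodule.map_comp, ← Module.End.mul_eq_comp, hfg.eq, Module.End.mul_eq_comp,
    Submodule.map_comp, hW]

noncomputable def diffU : Module.End ℂ (ℤ → ℂ) := shiftU - 1

theorem diffU_apply (c : ℤ → ℂ) (n : ℤ) : diffU c n = c (n - 1) - c n := rfl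

theorem diffU_apply_eq_zero_iff {c : ℤ → ℂ} {n : ℤ} : diffU c n = 0 ↔ c (n - 1) = c n :=
  sub_eq_zero

theorem commute_shiftU_diffU : Commute shiftU diffU :=
  (Commute.refl _).sub_right (Commute.one_right _)

theorem map_diffU_le {W : Submodule ℂ (ℤ → ℂ)} (hW : W.map shiftU = W) :
    W.map diffU ≤ W := by
  rintro _ ⟨w, hw, rfl⟩
  exact sub_mem (hW ▸ Submodule.mem_map_of_mem hw) hw

theorem eq_zero_of_diffU_eq_zero {c : ℤ → ℂ} {N : ℤ} (hN : ∀ n < N, c n = 0)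
    (h : diffU c = 0) : c = 0 :=
  funext fun n => eq_zero_of_lt_of_shift_eq hN
    (fun m _ => diffU_apply_eq_zero_iff.mp (congrFun h m)) n (lt_add_one n)

theorem map_diffU_ne_bot {W : Submodule ℂ (ℤ → ℂ)} (hWD : W ≤ Dspace) (hW : W ≠ ⊥) :
    W.map diffU ≠ ⊥ := by
  obtain ⟨w, hw, hw0⟩ := Submodule.exists_mem_ne_zero_of_ne_bot hW
  obtain ⟨⟨N, hN⟩, -⟩ := hWD hw
  intro hbot
  have hdiff : diffU w = 0 := by simpa [hbot] using Submodule.mem_map_of_mem (f := diffU) hw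
  exact hw0 (eq_zero_of_diffU_eq_zero hN hdiff)

theorem exists_support_diffU_subset_Ico {c : ℤ → ℂ} (hc : c ∈ Dspace) :
    ∃ N M, support (diffU c) ⊆ Ico N M := by
  obtain ⟨⟨N, hN⟩, e, M, hM⟩ := hc
  refine ⟨N, M + 1, support_subset_iff'.mpr fun n hn => ?_⟩
  rw [mem_Ico, not_and_or, not_le, not_lt] at hn
  rw [diffU_apply_eq_zero_iff]
  rcases hn with hn | hn
  · rw [hN n hn, hN (n - 1) (by omega)]
  · rw [hM n (by omega), hM (n - 1) (by omega)]

theorem support_subset_Ico_of_diffU {c : ℤ → ℂ} {N M a b : ℤ} (hc : support c ⊆ Ico N M)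
    (h : support (diffU c) ⊆ Ico a (b + 1)) : support c ⊆ Ico a b := by
  rw [support_subset_iff'] at hc h ⊢
  have hshift : ∀ n, n ∉ Ico a (b + 1) → c (n - 1) = c n := fun n hn =>
    diffU_apply_eq_zero_iff.mp (h n hn)
  intro n hn
  rw [mem_Ico, not_and_or, not_le, not_lt] at hn
  rcases hn with hn | hn
  · exact eq_zero_of_lt_of_shift_eq (N := N) (fun m hm => hc m (by simp [hm]))
      (fun m hm => hshift m (by simp [hm])) n hn
  · exact eq_zero_of_ge_of_shift_eq (M := M) (fun m hm => hc m (by simp; omega))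
      (fun m hm => hshift m (by simp; omega)) n hn

theorem eq_bot_of_map_diffU_eq {W : Submodule ℂ (ℤ → ℂ)} (hWD : W ≤ Dspace)
    (hW : W.map diffU = W) : W = ⊥ := by
  have hpre : ∀ w ∈ W, ∃ v ∈ W, diffU v = w := fun w hw => by
    rw [← hW] at hw; exact hw
  have hfin : ∀ w ∈ W, ∃ N M, support w ⊆ Ico N M := fun w hw => by
    obtain ⟨v, hv, rfl⟩ := hpre w hw
    exact exists_support_diffU_subset_Ico (hWD hv)
  have hwidth : ∀ k : ℕ, ∀ w ∈ W, ∀ a : ℤ, support w ⊆ Ico a (a + k) → w = 0 := by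
    intro k
    induction k with
    | zero => intro w _ a hw; simpa using hw
    | succ k ih =>
      intro w hw a hwk
      obtain ⟨v, hv, rfl⟩ := hpre w hw
      obtain ⟨N, M, hvNM⟩ := hfin v hv
      rw [Nat.cast_succ, ← add_assoc] at hwk
      rw [ih v hv a (support_subset_Ico_of_diffU hvNM hwk), map_zero]
  refine (Submodule.eq_bot_iff W).mpr fun w hw => ?_
  obtain ⟨N, M, hNM⟩ := hfin w hw
  refine hwidth (M - N).toNat w hw N (hNM.trans (Ico_subset_Ico_right ?_))
  omega

/-- The representation of `ℤ` on `D` (the generator acting by the shift `U`) contains no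
irreducible subrepresentations: there is no nonzero subspace `W ⊆ D` with `U(W) = W` whose
only `U`-stable subspaces are `0` and `W`. -/
theorem statement2 :
    ¬ ∃ W : Submodule ℂ (ℤ → ℂ), W ≤ Dspace ∧ W ≠ ⊥ ∧ Submodule.map shiftU W = W ∧
      ∀ W' : Submodule ℂ (ℤ → ℂ), W' ≤ W → Submodule.map shiftU W' = W' →
        W' = ⊥ ∨ W' = W := by
  rintro ⟨W, hWD, hW0, hWU, hirr⟩
  have hstable : (W.map diffU).map shiftU = W.map diffU :=
    Submodule.map_map_eq_of_commute commute_shiftU_diffU hWU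
  have hdiffW : W.map diffU = W :=
    (hirr _ (map_diffU_le hWU) hstable).resolve_left (map_diffU_ne_bot hWD hW0)
  exact hW0 (eq_bot_of_map_diffU_eq hWD hdiffW)
end

section
/- For c ∈ D and φ ∈ D', choose any integers N < M such that c_n = 0 for all n < N and c_n = c_M for all n ≥ M, and set ⟨c, φ⟩ = Σ_{i=N}^{M−1} (q^{M−i} − q^{M−i−1})·c_i·φ^{(M)}_i + c_M·φ^{(M)}_M. Then this value is independent of the choice of N and M, and the resulting ℂ-bilinear pairing D × D' → ℂ is non-degenerate: for every nonzero c ∈ D there exists φ ∈ D' with ⟨c, φ⟩ ≠ 0, and for every nonzero φ ∈ D' there exists c ∈ D with ⟨c, φ⟩ ≠ 0. -/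
/-- Membership in `D`: sequences vanishing for small `n` and constant for large `n`. -/
def IsDSeq (c : ℤ → ℂ) : Prop :=
  (∃ N : ℤ, ∀ n < N, c n = 0) ∧ ∃ M : ℤ, ∀ n ≥ M, c n = c M

/-- Membership in `D'` (residue cardinality `q`): a family `φ m n` (`φ^{(m)}_n`, with the
irrelevant entries `n > m` normalized to `0`) compatible with the transition maps
`T_m : S(m+1) → S(m)`. -/
def IsDistrib (q : ℤ) (φ : ℤ → ℤ → ℂ) : Prop :=
  (∀ m n : ℤ, m < n → φ m n = 0) ∧
  ∀ m : ℤ, φ m m = ((q : ℂ) - 1) * φ (m + 1) m + φ (m + 1) (m + 1) ∧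
    ∀ n < m, φ m n = (q : ℂ) * φ (m + 1) n

/-- The pairing `⟨c, φ⟩` computed with a choice of window `N < M`:
`Σ_{i=N}^{M−1} (q^{M−i} − q^{M−i−1})·c_i·φ^{(M)}_i + c_M·φ^{(M)}_M`. -/
noncomputable def pairAt (q : ℤ) (c : ℤ → ℂ) (φ : ℤ → ℤ → ℂ) (N M : ℤ) : ℂ :=
  (∑ i ∈ Finset.Ico N M, ((q : ℂ) ^ (M - i) - (q : ℂ) ^ (M - i - 1)) * c i * φ M i) +
    c M * φ M M

/-!
The weight of `c_i` at level `M` is `q^(M-i) - q^(M-i-1)`, which is multiplied by `q` when the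
level is raised to `M + 1`; since `φ^(M)_i = q φ^(M+1)_i` for `i < M`, and the diagonal entry
`φ^(M)_M = (q-1) φ^(M+1)_M + φ^(M+1)_(M+1)` absorbs the new boundary term, moving the top of the
window up does not change the pairing, and moving the bottom down only adds zero terms.

For non-degeneracy, the point evaluation `c ↦ (q - 1) c_k` is a distribution and detects any
`c_k ≠ 0`. Conversely, an entry `φ^(m)_n ≠ 0` is detected by the indicator of `{n}` if `n < m`
(giving `q^(m-n-1) (q - 1) φ^(m)_n`) and by the indicator of `[m, ∞)` if `n = m`.
-/

section

variable {q : ℤ} {c : ℤ → ℂ} {φ : ℤ → ℤ → ℂ}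

lemma pairAt_smul_add_left (c c' : ℤ → ℂ) (φ : ℤ → ℤ → ℂ) (N M : ℤ) (s : ℂ) :
    pairAt q (s • c + c') φ N M = s * pairAt q c φ N M + pairAt q c' φ N M := by
  simp only [pairAt, Pi.add_apply, Pi.smul_apply, smul_eq_mul, mul_add, add_mul, Finset.mul_sum,
    Finset.sum_add_distrib, mul_assoc, mul_left_comm _ s]
  ring

lemma pairAt_smul_add_right (c : ℤ → ℂ) (φ φ' : ℤ → ℤ → ℂ) (N M : ℤ) (s : ℂ) :
    pairAt q c (s • φ + φ') N M = s * pairAt q c φ N M + pairAt q c φ' N M := by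
  simp only [pairAt, Pi.add_apply, Pi.smul_apply, smul_eq_mul, mul_add, Finset.mul_sum,
    Finset.sum_add_distrib, mul_left_comm _ s]
  ring

lemma pairAt_eq_of_le_left {N N' M : ℤ} (hN : N' ≤ N) (hc : ∀ n < N, c n = 0) :
    pairAt q c φ N' M = pairAt q c φ N M := by
  rw [pairAt, pairAt, Finset.sum_subset (Finset.Ico_subset_Ico_left hN) fun i hi hiN => ?_]
  rw [hc i (by simp_all), mul_zero, zero_mul]

lemma pairAt_succ_right (hq : (q : ℂ) ≠ 0) (hφ : IsDistrib q φ) {N M : ℤ} (hNM : N ≤ M)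
    (hc : c (M + 1) = c M) : pairAt q c φ N (M + 1) = pairAt q c φ N M := by
  have hterm : ∀ i ∈ Finset.Ico N M,
      ((q : ℂ) ^ (M + 1 - i) - (q : ℂ) ^ (M + 1 - i - 1)) * c i * φ (M + 1) i =
        ((q : ℂ) ^ (M - i) - (q : ℂ) ^ (M - i - 1)) * c i * φ M i := by
    intro i hi
    rw [(hφ.2 M).2 i (Finset.mem_Ico.mp hi).2, show M + 1 - i = M - i + 1 by ring,
      add_sub_cancel_right, zpow_add_one₀ hq, zpow_sub_one₀ hq]
    field_simp
  rw [pairAt, pairAt, ← Finset.sum_Ico_add_eq_sum_Ico_add_one hNM, Finset.sum_congr rfl hterm,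
    (hφ.2 M).1, hc]
  simp only [sub_self, add_sub_cancel_left, zpow_one, zpow_zero]
  ring

def IsWindow (c : ℤ → ℂ) (N M : ℤ) : Prop :=
  N ≤ M ∧ (∀ n < N, c n = 0) ∧ ∀ n ≥ M, c n = c M

lemma IsWindow.mono {N M N' M' : ℤ} (h : IsWindow c N M) (hN : N' ≤ N) (hM : M ≤ M') :
    IsWindow c N' M' :=
  ⟨by linarith [h.1], fun n hn => h.2.1 n (by omega),
    fun n hn => by rw [h.2.2 n (by omega), h.2.2 M' (by linarith [h.1])]⟩

lemma IsWindow.isDSeq {N M : ℤ} (h : IsWindow c N M) : IsDSeq c :=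
  ⟨⟨N, h.2.1⟩, ⟨M, h.2.2⟩⟩

lemma pairAt_eq_of_le_right (hq : (q : ℂ) ≠ 0) (hφ : IsDistrib q φ) {N M M' : ℤ}
    (h : IsWindow c N M) (hM : M ≤ M') : pairAt q c φ N M' = pairAt q c φ N M := by
  induction M', hM using Int.leInduction with
  | base => rfl
  | succ M' hM ih =>
    rw [pairAt_succ_right hq hφ (h.1.trans hM) (by rw [h.2.2 _ (by omega), h.2.2 _ hM]), ih]

lemma IsWindow.pairAt_eq_of_le (hq : (q : ℂ) ≠ 0) (hφ : IsDistrib q φ) {N M N' M' : ℤ}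
    (h : IsWindow c N M) (hN : N' ≤ N) (hM : M ≤ M') :
    pairAt q c φ N' M' = pairAt q c φ N M := by
  rw [pairAt_eq_of_le_left hN h.2.1, pairAt_eq_of_le_right hq hφ h hM]

theorem IsWindow.pairAt_eq (hq : (q : ℂ) ≠ 0) (hφ : IsDistrib q φ) {N M N' M' : ℤ}
    (h : IsWindow c N M) (h' : IsWindow c N' M') : pairAt q c φ N M = pairAt q c φ N' M' := by
  rw [← h.pairAt_eq_of_le hq hφ (min_le_left N N') (le_max_left M M'),
    h'.pairAt_eq_of_le hq hφ (min_le_right N N') (le_max_right M M')]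

/-- The distribution `c ↦ (q - 1) c_k`. -/
noncomputable def evalDistrib (q k : ℤ) : ℤ → ℤ → ℂ := fun m n =>
  if k < m then (if n = k then (q : ℂ) ^ (k + 1 - m) else 0)
  else if n = m then (q : ℂ) - 1 else 0

lemma isDistrib_evalDistrib (hq : (q : ℂ) ≠ 0) (k : ℤ) : IsDistrib q (evalDistrib q k) := by
  refine ⟨fun m n hmn => ?_, fun m => ⟨?_, fun n hnm => ?_⟩⟩ <;> simp only [evalDistrib]
  · split_ifs <;> first | omega | rfl
  · split_ifs <;> subst_vars <;> first | omega | simp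
  · split_ifs <;> subst_vars <;> first | omega | simp
    rw [add_sub_right_comm, zpow_add_one₀ hq, mul_comm]

lemma pairAt_evalDistrib (hq : (q : ℂ) ≠ 0) (c : ℤ → ℂ) {k N M : ℤ} (hN : N ≤ k)
    (hM : k < M) : pairAt q c (evalDistrib q k) N M = ((q : ℂ) - 1) * c k := by
  have hweight :
      ((q : ℂ) ^ (M - k) - (q : ℂ) ^ (M - k - 1)) * (q : ℂ) ^ (k + 1 - M) = q - 1 := by
    rw [sub_mul, ← zpow_add₀ hq, ← zpow_add₀ hq, show M - k + (k + 1 - M) = 1 by ring,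
      show M - k - 1 + (k + 1 - M) = 0 by ring, zpow_one, zpow_zero]
  simp only [pairAt, evalDistrib, if_pos hM, if_neg hM.ne', mul_ite, mul_zero, add_zero]
  rw [Finset.sum_ite_eq', if_pos (Finset.mem_Ico.mpr ⟨hN, hM⟩), mul_right_comm, hweight]

lemma pairAt_indicator_singleton (φ : ℤ → ℤ → ℂ) {n M : ℤ} (h : n < M) :
    pairAt q (fun i => if i = n then 1 else 0) φ n M =
      ((q : ℂ) ^ (M - n) - (q : ℂ) ^ (M - n - 1)) * φ M n := by
  simp [pairAt, if_neg h.ne', Finset.sum_ite_eq', h]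

lemma pairAt_indicator_Ici (φ : ℤ → ℤ → ℂ) (m : ℤ) :
    pairAt q (fun i => if m ≤ i then 1 else 0) φ (m - 1) m = φ m m := by
  rw [pairAt, Finset.sum_eq_zero fun i hi => by rw [if_neg (by grind)]; ring]
  simp

theorem exists_isDistrib_pairAt_ne_zero (hq0 : (q : ℂ) ≠ 0) (hq1 : (q : ℂ) ≠ 1)
    (hc : c ≠ 0) :
    ∃ φ, IsDistrib q φ ∧ ∀ N M, IsWindow c N M → pairAt q c φ N M ≠ 0 := by
  obtain ⟨k, hk⟩ := Function.ne_iff.mp hc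
  refine ⟨evalDistrib q k, isDistrib_evalDistrib hq0 k, fun N M h => ?_⟩
  have hwindow : IsWindow c (min N k) (max M (k + 1)) :=
    h.mono (min_le_left N k) (le_max_left M (k + 1))
  rw [h.pairAt_eq hq0 (isDistrib_evalDistrib hq0 k) hwindow,
    pairAt_evalDistrib hq0 c (min_le_right N k) (by omega)]
  exact mul_ne_zero (sub_ne_zero.mpr hq1) hk

theorem exists_isDSeq_pairAt_ne_zero (hq0 : (q : ℂ) ≠ 0) (hq1 : (q : ℂ) ≠ 1)
    (hφ : IsDistrib q φ) {m n : ℤ} (hnm : n ≤ m) (hφmn : φ m n ≠ 0) :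
    ∃ c, IsDSeq c ∧ ∀ N M, IsWindow c N M → pairAt q c φ N M ≠ 0 := by
  rcases hnm.eq_or_lt with rfl | hnm
  · have hwindow : IsWindow (fun i => if n ≤ i then 1 else 0) (n - 1) n :=
      ⟨by omega, fun i hi => if_neg (by omega), fun i hi => by simp [hi]⟩
    refine ⟨_, hwindow.isDSeq, fun N M h => ?_⟩
    rwa [h.pairAt_eq hq0 hφ hwindow, pairAt_indicator_Ici]
  · have hwindow : IsWindow (fun i => if i = n then 1 else 0) n m :=
      ⟨hnm.le, fun i hi => if_neg (by omega),
        fun i hi => by simp [hnm.ne', (hnm.trans_le hi).ne']⟩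
    refine ⟨_, hwindow.isDSeq, fun N M h => ?_⟩
    rw [h.pairAt_eq hq0 hφ hwindow, pairAt_indicator_singleton φ hnm, zpow_sub_one₀ hq0,
      ← mul_one_sub]
    have : (1 : ℂ) - (q : ℂ)⁻¹ ≠ 0 := sub_ne_zero.mpr (by simpa [eq_comm] using hq1)
    exact mul_ne_zero (mul_ne_zero (zpow_ne_zero _ hq0) this) hφmn

end

/-- The pairing value is independent of the chosen window `N < M` (with `c_n = 0` for `n < N`
and `c_n = c_M` for `n ≥ M`), the resulting pairing `D × D' → ℂ` is ℂ-bilinear, and it is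
non-degenerate in both arguments. -/
theorem statement4 (q : ℤ) (hq : 2 ≤ q) :
    (∀ (c : ℤ → ℂ) (φ : ℤ → ℤ → ℂ), IsDistrib q φ →
      ∀ N M N' M' : ℤ, N < M → N' < M' →
        (∀ n < N, c n = 0) → (∀ n ≥ M, c n = c M) →
        (∀ n < N', c n = 0) → (∀ n ≥ M', c n = c M') →
        pairAt q c φ N M = pairAt q c φ N' M') ∧
    (∀ (c c' : ℤ → ℂ) (φ φ' : ℤ → ℤ → ℂ) (N M : ℤ) (s : ℂ),
      pairAt q (s • c + c') φ N M = s * pairAt q c φ N M + pairAt q c' φ N M ∧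
      pairAt q c (s • φ + φ') N M = s * pairAt q c φ N M + pairAt q c φ' N M) ∧
    (∀ c : ℤ → ℂ, IsDSeq c → c ≠ 0 →
      ∃ φ : ℤ → ℤ → ℂ, IsDistrib q φ ∧
        ∀ N M : ℤ, N < M → (∀ n < N, c n = 0) → (∀ n ≥ M, c n = c M) →
          pairAt q c φ N M ≠ 0) ∧
    (∀ φ : ℤ → ℤ → ℂ, IsDistrib q φ → (∃ m n : ℤ, n ≤ m ∧ φ m n ≠ 0) →
      ∃ c : ℤ → ℂ, IsDSeq c ∧
        ∀ N M : ℤ, N < M → (∀ n < N, c n = 0) → (∀ n ≥ M, c n = c M) →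
          pairAt q c φ N M ≠ 0) := by
  have hq0 : (q : ℂ) ≠ 0 := by exact_mod_cast (by omega : q ≠ 0)
  have hq1 : (q : ℂ) ≠ 1 := by exact_mod_cast (by omega : q ≠ 1)
  refine ⟨fun c φ hφ N M N' M' h h' h1 h2 h1' h2' =>
      IsWindow.pairAt_eq hq0 hφ ⟨h.le, h1, h2⟩ ⟨h'.le, h1', h2'⟩,
    fun c c' φ φ' N M s =>
      ⟨pairAt_smul_add_left c c' φ N M s, pairAt_smul_add_right c φ φ' N M s⟩,
    fun c _ hc => ?_, fun φ hφ ⟨m, n, hnm, hφmn⟩ => ?_⟩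
  · obtain ⟨φ, hφ, hne⟩ := exists_isDistrib_pairAt_ne_zero hq0 hq1 hc
    exact ⟨φ, hφ, fun N M h h1 h2 => hne N M ⟨h.le, h1, h2⟩⟩
  · obtain ⟨c, hc, hne⟩ := exists_isDSeq_pairAt_ne_zero hq0 hq1 hφ hnm hφmn
    exact ⟨c, hc, fun N M h h1 h2 => hne N M ⟨h.le, h1, h2⟩⟩
end

section
/- For every α ∈ ℂ with α ≠ 0, the eigenspace Φ_α = { φ ∈ D' : Uφ = α·φ } of the shift operator U on D' is a one-dimensional ℂ-vector space. -/
/-- The space `D'` (residue cardinality `q`): families `φ m n` (`φ^{(m)}_n`, with the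
irrelevant entries `n > m` normalized to `0`) compatible with the transition maps
`T_m : S(m+1) → S(m)`, as a ℂ-subspace of `ℤ → ℤ → ℂ`. -/
noncomputable def DistSpace (q : ℤ) : Submodule ℂ (ℤ → ℤ → ℂ) where
  carrier := {φ | (∀ m n : ℤ, m < n → φ m n = 0) ∧
    ∀ m : ℤ, φ m m = ((q : ℂ) - 1) * φ (m + 1) m + φ (m + 1) (m + 1) ∧
      ∀ n < m, φ m n = (q : ℂ) * φ (m + 1) n}
  add_mem' := by
    rintro a b ⟨ha0, ha⟩ ⟨hb0, hb⟩
    refine ⟨fun m n h => by simp [Pi.add_apply, ha0 m n h, hb0 m n h],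
      fun m => ⟨?_, fun n h => ?_⟩⟩
    · have h1 := (ha m).1
      have h2 := (hb m).1
      simp only [Pi.add_apply]
      rw [h1, h2]; ring
    · have h1 := (ha m).2 n h
      have h2 := (hb m).2 n h
      simp only [Pi.add_apply]
      rw [h1, h2]; ring
  zero_mem' := ⟨fun _ _ _ => rfl, fun m => ⟨by simp, fun n h => by simp⟩⟩
  smul_mem' := by
    rintro s a ⟨ha0, ha⟩
    refine ⟨fun m n h => by simp [Pi.smul_apply, ha0 m n h],
      fun m => ⟨?_, fun n h => ?_⟩⟩
    · have h1 := (ha m).1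
      simp only [Pi.smul_apply, smul_eq_mul]
      rw [h1]; ring
    · have h1 := (ha m).2 n h
      simp only [Pi.smul_apply, smul_eq_mul]
      rw [h1]; ring

/-- The shift operator `U` on distributions: `(Uφ)^{(m)}_n = φ^{(m−1)}_{n−1}`. -/
def shiftDist : (ℤ → ℤ → ℂ) →ₗ[ℂ] (ℤ → ℤ → ℂ) where
  toFun φ := fun m n => φ (m - 1) (n - 1)
  map_add' := fun _ _ => rfl
  map_smul' := fun _ _ => rfl

/-!
An eigenvector `φ` of `U` with eigenvalue `α ≠ 0` is determined by its column `k ↦ φ k 0`,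
since `α ^ n * φ m n = φ (m - n) 0`. The compatibility conditions defining `D'` say that this
column vanishes for `k < 0`, is geometric with ratio `q⁻¹` for `k ≥ 1`, and, on the diagonal,
that `(q - 1) * α * φ 1 0 = (α - 1) * φ 0 0`. Since `q ≠ 0, 1`, the whole eigenvector is
therefore determined by `φ 0 0`. Conversely the column `(q - 1) * α, α - 1, (α - 1) / q, …`
solves these relations, so evaluation at the origin is an isomorphism `Φ_α ≃ ℂ`.
-/

theorem mem_ker_shiftDist_sub_smul_iff {α : ℂ} {φ : ℤ → ℤ → ℂ} :
    φ ∈ LinearMap.ker (shiftDist - α • LinearMap.id) ↔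
      ∀ m n, φ (m - 1) (n - 1) = α * φ m n := by
  simp only [LinearMap.mem_ker, funext_iff]
  exact forall₂_congr fun _ _ => sub_eq_zero

section Uniqueness

variable {q : ℤ} {α : ℂ} {φ : ℤ → ℤ → ℂ}

theorem zpow_mul_apply_eq_apply_sub_zero (hα : α ≠ 0)
    (hU : ∀ m n, φ (m - 1) (n - 1) = α * φ m n) (m n : ℤ) :
    α ^ n * φ m n = φ (m - n) 0 := by
  suffices h : ∀ d n, α ^ n * φ (d + n) n = φ d 0 by simpa using h (m - n) n
  intro d n
  induction n using Int.induction_on with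
  | zero => simp
  | succ n ih =>
    rw [← ih, zpow_add_one₀ hα, mul_assoc, ← hU]
    simp only [add_sub_cancel_right, ← add_assoc]
  | pred n ih =>
    rw [← ih, zpow_sub_one₀ hα, ← add_sub_assoc, hU, mul_assoc, inv_mul_cancel_left₀ hα]

theorem apply_zero_eq_zero_of_apply_zero_zero_eq_zero (hq₀ : q ≠ 0) (hq₁ : q ≠ 1)
    (hα : α ≠ 0) (hφ : φ ∈ DistSpace q) (hU : ∀ m n, φ (m - 1) (n - 1) = α * φ m n)
    (h00 : φ 0 0 = 0) (k : ℤ) : φ k 0 = 0 := by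
  obtain ⟨hsupp, hcompat⟩ := hφ
  have h11 : φ 1 1 = 0 := by
    simpa [h00, hα] using (hU 1 1).symm
  have h10 : φ 1 0 = 0 := by
    have hq₁' : (q : ℂ) - 1 ≠ 0 := sub_ne_zero.2 (by exact_mod_cast hq₁)
    simpa [h00, h11, hq₁'] using (hcompat 0).1.symm
  have hpos : ∀ j : ℕ, φ (j + 1) 0 = 0 := by
    intro j
    induction j with
    | zero => simpa using h10
    | succ j ih =>
      have hq₀' : (q : ℂ) ≠ 0 := by exact_mod_cast hq₀
      simpa [ih, hq₀'] using ((hcompat (j + 1)).2 0 (by omega)).symm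
  rcases lt_trichotomy k 0 with hk | rfl | hk
  · exact hsupp k 0 hk
  · exact h00
  · obtain ⟨j, rfl⟩ : ∃ j : ℕ, k = j + 1 := ⟨(k - 1).toNat, by omega⟩
    exact hpos j

theorem eq_zero_of_apply_zero_zero_eq_zero (hq₀ : q ≠ 0) (hq₁ : q ≠ 1) (hα : α ≠ 0)
    (hφ : φ ∈ DistSpace q) (hU : ∀ m n, φ (m - 1) (n - 1) = α * φ m n) (h00 : φ 0 0 = 0) :
    φ = 0 := by
  funext m n
  have h := zpow_mul_apply_eq_apply_sub_zero hα hU m n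
  rw [apply_zero_eq_zero_of_apply_zero_zero_eq_zero hq₀ hq₁ hα hφ hU h00] at h
  exact (mul_eq_zero.1 h).resolve_left (zpow_ne_zero n hα)

end Uniqueness

noncomputable def eigenColumn (q : ℤ) (α : ℂ) (k : ℤ) : ℂ :=
  if k < 0 then 0 else if k = 0 then ((q : ℂ) - 1) * α else (α - 1) * (q : ℂ) ^ (1 - k)

noncomputable def eigenDist (q : ℤ) (α : ℂ) (m n : ℤ) : ℂ :=
  α ^ (-n) * eigenColumn q α (m - n)

section Existence

variable {q : ℤ} {α : ℂ}

theorem eigenColumn_of_neg {k : ℤ} (hk : k < 0) : eigenColumn q α k = 0 := by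
  simp [eigenColumn, hk]

@[simp]
theorem eigenColumn_zero : eigenColumn q α 0 = ((q : ℂ) - 1) * α := by
  simp [eigenColumn]

@[simp]
theorem eigenColumn_one : eigenColumn q α 1 = α - 1 := by
  simp [eigenColumn]

theorem eigenColumn_eq_mul_eigenColumn_add_one (hq₀ : q ≠ 0) {k : ℤ} (hk : 1 ≤ k) :
    eigenColumn q α k = q * eigenColumn q α (k + 1) := by
  have hq₀' : (q : ℂ) ≠ 0 := by exact_mod_cast hq₀
  simp only [eigenColumn, show ¬k < 0 by omega, show k ≠ 0 by omega,
    show ¬k + 1 < 0 by omega, show k + 1 ≠ 0 by omega, if_false]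
  rw [show 1 - k = 1 + (1 - (k + 1)) by ring, zpow_one_add₀ hq₀']
  ring

theorem eigenDist_mem_distSpace (hq₀ : q ≠ 0) (hα : α ≠ 0) : eigenDist q α ∈ DistSpace q := by
  refine ⟨fun m n h => ?_, fun m => ⟨?_, fun n h => ?_⟩⟩
  · simp [eigenDist, eigenColumn_of_neg (sub_neg.2 h)]
  · simp only [eigenDist, sub_self, add_sub_cancel_left, eigenColumn_zero, eigenColumn_one,
      neg_add, zpow_add₀ hα, zpow_neg_one]
    field_simp
    ring
  · rw [eigenDist, eigenDist, eigenColumn_eq_mul_eigenColumn_add_one hq₀ (by omega),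
      sub_add_eq_add_sub]
    ring

theorem eigenDist_mem_ker (hα : α ≠ 0) :
    eigenDist q α ∈ LinearMap.ker (shiftDist - α • LinearMap.id) := by
  refine mem_ker_shiftDist_sub_smul_iff.2 fun m n => ?_
  rw [eigenDist, eigenDist, sub_sub_sub_cancel_right, neg_sub, sub_eq_add_neg, zpow_add₀ hα,
    zpow_one]
  ring

end Existence

noncomputable abbrev shiftEigenspace (q : ℤ) (α : ℂ) : Submodule ℂ (ℤ → ℤ → ℂ) :=
  DistSpace q ⊓ LinearMap.ker (shiftDist - α • LinearMap.id)

section ShiftEigenspace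

variable {q : ℤ} {α : ℂ}

noncomputable def evalOrigin (q : ℤ) (α : ℂ) : shiftEigenspace q α →ₗ[ℂ] ℂ :=
  (LinearMap.proj 0 ∘ₗ LinearMap.proj 0).domRestrict (shiftEigenspace q α)

@[simp]
theorem evalOrigin_apply (φ : shiftEigenspace q α) : evalOrigin q α φ = (φ : ℤ → ℤ → ℂ) 0 0 :=
  rfl

theorem evalOrigin_injective (hq₀ : q ≠ 0) (hq₁ : q ≠ 1) (hα : α ≠ 0) :
    Function.Injective (evalOrigin q α) := by
  refine (injective_iff_map_eq_zero _).2 fun ⟨φ, hφ, hU⟩ h00 => Subtype.ext ?_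
  exact eq_zero_of_apply_zero_zero_eq_zero hq₀ hq₁ hα hφ
    (mem_ker_shiftDist_sub_smul_iff.1 hU) h00

theorem evalOrigin_surjective (hq₀ : q ≠ 0) (hq₁ : q ≠ 1) (hα : α ≠ 0) :
    Function.Surjective (evalOrigin q α) := by
  have hψ : eigenDist q α ∈ shiftEigenspace q α :=
    ⟨eigenDist_mem_distSpace hq₀ hα, eigenDist_mem_ker hα⟩
  have hψ00 : eigenDist q α 0 0 ≠ 0 := by
    have hq₁' : (q : ℂ) - 1 ≠ 0 := sub_ne_zero.2 (by exact_mod_cast hq₁)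
    simp [eigenDist, hq₁', hα]
  intro c
  refine ⟨(c / eigenDist q α 0 0) • ⟨eigenDist q α, hψ⟩, ?_⟩
  simp [hψ00]

noncomputable def shiftEigenspaceEquiv (hq₀ : q ≠ 0) (hq₁ : q ≠ 1) (hα : α ≠ 0) :
    shiftEigenspace q α ≃ₗ[ℂ] ℂ :=
  LinearEquiv.ofBijective (evalOrigin q α)
    ⟨evalOrigin_injective hq₀ hq₁ hα, evalOrigin_surjective hq₀ hq₁ hα⟩

theorem finrank_shiftEigenspace (hq₀ : q ≠ 0) (hq₁ : q ≠ 1) (hα : α ≠ 0) :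
    Module.finrank ℂ (shiftEigenspace q α) = 1 :=
  (shiftEigenspaceEquiv hq₀ hq₁ hα).finrank_eq.trans (Module.finrank_self ℂ)

end ShiftEigenspace

/-- For every `α ≠ 0`, the eigenspace `Φ_α = {φ ∈ D' : Uφ = α·φ}` of the shift operator on
`D'` is one-dimensional over ℂ. -/
theorem statement5 (q : ℤ) (hq : 2 ≤ q) (α : ℂ) (hα : α ≠ 0) :
    Module.finrank ℂ
      ↥(DistSpace q ⊓ LinearMap.ker (shiftDist - α • LinearMap.id)) = 1 :=
  finrank_shiftEigenspace (by omega) (by omega) hα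
end

section
/- For every α ∈ ℂ with α ≠ 0, the family g_α is compatible with the transition maps (so g_α ∈ D'), g_α ≠ 0, and U g_α = α·g_α; moreover g_α is normalized so that its pairing with the indicator sequence c (c_n = 1 for n ≥ 0, c_n = 0 for n < 0, the characteristic function of O_L) equals 1. -/
/-- The element `g_α`: `(g_α)^{(m)}_m = α^{−m}`,
`(g_α)^{(m)}_{m−k} = α^{−m+k−1}(α−1)/(q^{k−1}(q−1))` for `k > 0` (so at `n = m − k < m` the
value is `α^{−n−1}(α−1)/(q^{m−n−1}(q−1))`). -/
noncomputable def gAlpha (q : ℤ) (α : ℂ) : ℤ → ℤ → ℂ := fun m n =>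
  if n = m then α ^ (-m)
  else if n < m then α ^ (-n - 1) * (α - 1) / ((q : ℂ) ^ (m - n - 1) * ((q : ℂ) - 1))
  else 0

/-- The characteristic function of `O_L`: `c_n = 1` for `n ≥ 0`, `c_n = 0` for `n < 0`. -/
noncomputable def indO : ℤ → ℂ := fun n => if 0 ≤ n then 1 else 0

open Finset

theorem Finset.sum_Ico_int_telescope {G : Type*} [AddCommGroup G] (f : ℤ → G) {a b : ℤ}
    (hab : a ≤ b) : ∑ i ∈ Ico a b, (f i - f (i + 1)) = f a - f b := by
  induction b, hab using Int.leInduction with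
  | base => simp
  | succ b hab ih =>
    rw [← insert_Ico_right_eq_Ico_add_one hab, sum_insert right_notMem_Ico, ih]
    abel

section gAlpha

variable (q : ℤ) (α : ℂ)

lemma gAlpha_self (m : ℤ) : gAlpha q α m m = α ^ (-m) := by
  simp [gAlpha]

lemma gAlpha_of_lt {m n : ℤ} (h : n < m) :
    gAlpha q α m n = α ^ (-n - 1) * (α - 1) / ((q : ℂ) ^ (m - n - 1) * ((q : ℂ) - 1)) := by
  simp [gAlpha, h.ne, h]

lemma gAlpha_of_gt {m n : ℤ} (h : m < n) : gAlpha q α m n = 0 := by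
  simp [gAlpha, h.ne', h.not_gt]

lemma gAlpha_zero_zero : gAlpha q α 0 0 = 1 := by
  simp [gAlpha_self]

variable {q α}

lemma isDistrib_gAlpha (hq : (q : ℂ) ≠ 0) (hq1 : (q : ℂ) - 1 ≠ 0) (hα : α ≠ 0) :
    IsDistrib q (gAlpha q α) := by
  refine ⟨fun m n h ↦ gAlpha_of_gt q α h, fun m ↦ ⟨?_, fun n hn ↦ ?_⟩⟩
  · rw [gAlpha_self, gAlpha_self, gAlpha_of_lt q α (lt_add_one m),
      show m + 1 - m - 1 = 0 by ring, show -(m + 1) = -m - 1 by ring, zpow_sub_one₀ hα]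
    field_simp
    ring
  · rw [gAlpha_of_lt q α hn, gAlpha_of_lt q α (by omega : n < m + 1),
      show m + 1 - n - 1 = m - n - 1 + 1 by ring, zpow_add_one₀ hq]
    field_simp

lemma gAlpha_sub_one_sub_one (hα : α ≠ 0) (m n : ℤ) :
    gAlpha q α (m - 1) (n - 1) = α * gAlpha q α m n := by
  rcases lt_trichotomy n m with h | rfl | h
  · rw [gAlpha_of_lt q α h, gAlpha_of_lt q α (by omega : n - 1 < m - 1),
      show -(n - 1) - 1 = -n - 1 + 1 by ring, zpow_add_one₀ hα,
      show m - 1 - (n - 1) - 1 = m - n - 1 by ring]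
    ring
  · rw [gAlpha_self, gAlpha_self, show -(n - 1) = -n + 1 by ring, zpow_add_one₀ hα]
    ring
  · rw [gAlpha_of_gt q α h, gAlpha_of_gt q α (by omega : m - 1 < n - 1), mul_zero]

lemma pairing_weight_mul_gAlpha (hq : (q : ℂ) ≠ 0) (hq1 : (q : ℂ) - 1 ≠ 0) (hα : α ≠ 0)
    {M i : ℤ} (h : i < M) :
    ((q : ℂ) ^ (M - i) - (q : ℂ) ^ (M - i - 1)) * gAlpha q α M i
      = α ^ (-i) - α ^ (-(i + 1)) := by
  have hqM : (q : ℂ) ^ (M - i) = (q : ℂ) ^ (M - i - 1) * q := by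
    rw [← zpow_add_one₀ hq, sub_add_cancel]
  have hαi : α ^ (-i) = α ^ (-i - 1) * α := by rw [← zpow_add_one₀ hα, sub_add_cancel]
  rw [gAlpha_of_lt q α h, hqM, hαi, neg_add']
  field_simp

end gAlpha

lemma indO_window {N M : ℤ} (h0 : ∀ n < N, indO n = 0) (h1 : ∀ n ≥ M, indO n = indO M) :
    N ≤ 0 ∧ 0 ≤ M := by
  constructor
  · by_contra! hN
    simpa [indO, hN.le] using h0 0 hN
  · by_contra! hM
    simpa [indO, hM.not_ge] using h1 0 hM.le

lemma pairAt_indO (q : ℤ) (φ : ℤ → ℤ → ℂ) {N M : ℤ} (hN : N ≤ 0) (hM : 0 ≤ M) :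
    pairAt q indO φ N M
      = ∑ i ∈ Ico 0 M, ((q : ℂ) ^ (M - i) - (q : ℂ) ^ (M - i - 1)) * φ M i + φ M M := by
  have hsub : Ico 0 M ⊆ Ico N M := Ico_subset_Ico hN le_rfl
  rw [pairAt, ← sum_subset hsub fun i hi hi0 ↦ ?_]
  · refine congrArg₂ _ (sum_congr rfl fun i hi ↦ ?_) (by simp [indO, hM])
    simp [indO, (mem_Ico.mp hi).1]
  · have hi_neg : i < 0 := by
      simp only [mem_Ico] at hi hi0
      omega
    simp [indO, hi_neg.not_ge]

/-- For every `α ≠ 0`: `g_α` is compatible with the transition maps (so `g_α ∈ D'`),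
`g_α ≠ 0`, `U g_α = α·g_α` (i.e. `(g_α)^{(m−1)}_{n−1} = α·(g_α)^{(m)}_n`), and the pairing
of `g_α` with the characteristic function of `O_L` equals `1`. -/
theorem statement6 (q : ℤ) (hq : 2 ≤ q) (α : ℂ) (hα : α ≠ 0) :
    IsDistrib q (gAlpha q α) ∧
    gAlpha q α ≠ 0 ∧
    (∀ m n : ℤ, gAlpha q α (m - 1) (n - 1) = α * gAlpha q α m n) ∧
    (∀ N M : ℤ, N < M → (∀ n < N, indO n = 0) → (∀ n ≥ M, indO n = indO M) →
      pairAt q indO (gAlpha q α) N M = 1) := by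
  have hq0 : (q : ℂ) ≠ 0 := by exact_mod_cast (by omega : q ≠ 0)
  have hq1 : (q : ℂ) - 1 ≠ 0 := sub_ne_zero.mpr (by exact_mod_cast (by omega : q ≠ 1))
  refine ⟨isDistrib_gAlpha hq0 hq1 hα, fun h ↦ ?_, gAlpha_sub_one_sub_one hα,
    fun N M _ h0 h1 ↦ ?_⟩
  · simpa [h] using gAlpha_zero_zero q α
  · obtain ⟨hN, hM⟩ := indO_window h0 h1
    rw [pairAt_indO q _ hN hM, gAlpha_self,
      sum_congr rfl fun i hi ↦ pairing_weight_mul_gAlpha hq0 hq1 hα (mem_Ico.mp hi).2,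
      sum_Ico_int_telescope (fun i ↦ α ^ (-i)) hM]
    simp
end

section
/- The representation π of the discrete Heisenberg group G on V defined by π(a,b,c)(δ_m) = q^{−c−a·m}·δ_{m+b} (the induced representation ind_{H⊕C}^G(χ₀) for the character χ₀(a⊕c) = q^{−c}) is irreducible: every ℂ-subspace of V stable under π(g) for all g ∈ G is either 0 or all of V. -/
/-!
`π(1,0,0)` is diagonal in the basis `δ_m`, with pairwise distinct eigenvalues `q^{-m}`. Applying
to a nonzero `v ∈ W` a polynomial in `π(1,0,0)` that vanishes at all eigenvalues on the support
of `v` but one shows that a nonzero invariant subspace contains some `δ_m`; the translations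
`π(0,k,0)` then carry `δ_m` to every `δ_n`.
-/

/-- Multiplication of the discrete Heisenberg group `Heis(3,ℤ)` on `ℤ³`:
`(a₁,b₁,c₁)·(a₂,b₂,c₂) = (a₁+a₂, b₁+b₂, c₁+c₂+a₁·b₂)`. -/
def hmul (x y : ℤ × ℤ × ℤ) : ℤ × ℤ × ℤ :=
  (x.1 + y.1, x.2.1 + y.2.1, x.2.2 + y.2.2 + x.1 * y.2.1)

/-- The operator `π(a,b,c)` on the space `V = ℤ →₀ ℂ` of finitely supported functions,
defined on the standard basis by `π(a,b,c)(δ_m) = q^{−c−a·m}·δ_{m+b}` (the induced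
representation `ind_{H⊕C}^G(χ₀)` with `χ₀(a⊕c) = q^{−c}`). -/
noncomputable def piRep (q : ℤ) (g : ℤ × ℤ × ℤ) : (ℤ →₀ ℂ) →ₗ[ℂ] (ℤ →₀ ℂ) :=
  Finsupp.lift (ℤ →₀ ℂ) ℂ ℤ fun m =>
    ((q : ℂ) ^ (-g.2.2 - g.1 * m)) • Finsupp.single (m + g.2.1) (1 : ℂ)

open Finsupp Polynomial

lemma piRep_single (q : ℤ) (g : ℤ × ℤ × ℤ) (m : ℤ) :
    piRep q g (single m 1) = ((q : ℂ) ^ (-g.2.2 - g.1 * m)) • single (m + g.2.1) 1 := by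
  rw [piRep, lift_apply, sum_single_index (by simp), one_smul]

lemma zpow_neg_intCast_injective {q : ℤ} (hq : 2 ≤ q) :
    Function.Injective fun m : ℤ ↦ (q : ℂ) ^ (-m) := by
  intro a b (hab : (q : ℂ) ^ (-a) = (q : ℂ) ^ (-b))
  have hab' : (q : ℚ) ^ (-a) = (q : ℚ) ^ (-b) :=
    Rat.cast_injective (α := ℂ) (by push_cast; exact hab)
  exact neg_injective <| zpow_right_injective₀ (by positivity) (by norm_cast; omega) hab'

theorem Finsupp.single_one_mem_of_mem_support {ι K : Type*} [Field K]
    {f : Module.End K (ι →₀ K)} {μ : ι → K} (hμ : Function.Injective μ)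
    (hf : ∀ i, f (single i 1) = μ i • single i 1) {W : Submodule K (ι →₀ K)}
    (hW : W ≤ W.comap f) {v : ι →₀ K} (hv : v ∈ W) {i : ι} (hi : i ∈ v.support) :
    single i 1 ∈ W := by
  classical
  -- `p` vanishes at every eigenvalue along the support of `v` except at `μ i`.
  set p : K[X] := ∏ j ∈ v.support.erase i, (X - C (μ j))
  have hp_ne : p.eval (μ i) ≠ 0 := by
    simp only [p, eval_prod, eval_sub, eval_X, eval_C, Finset.prod_ne_zero_iff, sub_ne_zero]
    exact fun j hj ↦ hμ.ne (Finset.ne_of_mem_erase hj).symm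
  have hp_zero : ∀ j ∈ v.support, j ≠ i → p.eval (μ j) = 0 := fun j hj hji ↦ by
    simp only [p, eval_prod]
    exact Finset.prod_eq_zero (Finset.mem_erase.2 ⟨hji, hj⟩) (by simp)
  have hpv : aeval f p v = (v i * p.eval (μ i)) • single i 1 := by
    conv_lhs => rw [← v.sum_single]
    rw [Finsupp.sum, map_sum, Finset.sum_eq_single i]
    · rw [← smul_single_one, map_smul, Module.End.aeval_apply_of_mem_apply_eq_smul (hf i),
        smul_smul]
    · intro j hj hji
      rw [← smul_single_one, map_smul, Module.End.aeval_apply_of_mem_apply_eq_smul (hf j),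
        hp_zero j hj hji, zero_smul, smul_zero]
    · exact fun hi' ↦ absurd hi hi'
  have hc : v i * p.eval (μ i) ≠ 0 := mul_ne_zero (mem_support_iff.1 hi) hp_ne
  have hmem := W.smul_mem (v i * p.eval (μ i))⁻¹ (aeval_apply_smul_mem_of_le_comap hv p f hW)
  rwa [hpv, smul_smul, inv_mul_cancel₀ hc, one_smul] at hmem

/-- The representation `π` of the discrete Heisenberg group on `V` is irreducible: every
ℂ-subspace of `V` stable under all `π(g)` is `0` or `V`. -/
theorem statement9 (q : ℤ) (hq : 2 ≤ q) :
    ∀ W : Submodule ℂ (ℤ →₀ ℂ),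
      (∀ g : ℤ × ℤ × ℤ, ∀ v ∈ W, piRep q g v ∈ W) → W = ⊥ ∨ W = ⊤ := by
  intro W hW
  refine or_iff_not_imp_left.2 fun hbot ↦ ?_
  obtain ⟨v, hvW, hv⟩ := Submodule.exists_mem_ne_zero_of_ne_bot hbot
  obtain ⟨m, hm⟩ := support_nonempty_iff.2 hv
  have hsingle_m : single m 1 ∈ W :=
    single_one_mem_of_mem_support (zpow_neg_intCast_injective hq)
      (fun n ↦ by simp [piRep_single]) (hW (1, 0, 0)) hvW hm
  have hsingle : ∀ k, single k (1 : ℂ) ∈ W := fun k ↦ by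
    simpa [piRep_single] using hW (0, k - m, 0) _ hsingle_m
  rw [eq_top_iff, ← Finsupp.basisSingleOne.span_eq, Submodule.span_le]
  rintro _ ⟨k, rfl⟩
  simpa using hsingle k
end

section
/- For every α ∈ ℂ with α ≠ 0, the representation ρ_α of the discrete Heisenberg group G on V is irreducible: every ℂ-subspace of V stable under ρ_α(g) for all g ∈ G is either 0 or all of V. -/
/-!
The element `(1, 0, 0)` acts diagonally on the basis, `Δ_n ↦ α q^{-(n+1)} Δ_n`, with pairwise
distinct eigenvalues since `q ≥ 2` and `α ≠ 0`. A subspace stable under such an operator contains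
a basis vector as soon as it is nonzero: subtracting `μ_i • v` from `T v` kills the `i`-th
coordinate of `v` and keeps the others, so the support shrinks down to a single point. The
translations `(0, b, 0)` then carry that basis vector to every other one.
-/

/-- The operator `ρ_α(a,b,c)` on the space `V = ℤ →₀ ℂ` of finitely supported functions,
defined on the standard basis by `ρ_α(a,b,c)(Δ_m) = q^{−c−a(m+1)}·α^a·Δ_{m+b}`. -/
noncomputable def heisRep (q : ℤ) (α : ℂ) (g : ℤ × ℤ × ℤ) : (ℤ →₀ ℂ) →ₗ[ℂ] (ℤ →₀ ℂ) :=
  Finsupp.lift (ℤ →₀ ℂ) ℂ ℤ fun m =>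
    ((q : ℂ) ^ (-g.2.2 - g.1 * (m + 1)) * α ^ g.1) • Finsupp.single (m + g.2.1) (1 : ℂ)

open Finsupp

theorem zpow_right_injective_of_norm_ne_one {K : Type*} [NormedDivisionRing K] {z : K}
    (hz : z ≠ 0) (hz1 : ‖z‖ ≠ 1) : Function.Injective fun n : ℤ => z ^ n := by
  intro m n h
  have hnorm : ‖z‖ ^ m = ‖z‖ ^ n := by simpa only [norm_zpow] using congrArg norm h
  exact zpow_right_injective₀ (norm_pos_iff.mpr hz) hz1 hnorm

section Diagonal

variable {ι K : Type*} [Field K]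

theorem Finsupp.exists_single_one_mem_of_invariant_of_diagonal
    {T : (ι →₀ K) →ₗ[K] (ι →₀ K)} {μ : ι → K} (hμ : Function.Injective μ)
    (hT : ∀ v i, T v i = μ i * v i) {W : Submodule K (ι →₀ K)} (hW : ∀ v ∈ W, T v ∈ W)
    {v : ι →₀ K} (hv : v ∈ W) (hv0 : v ≠ 0) : ∃ i, single i (1 : K) ∈ W := by
  induction hcard : v.support.card using Nat.strong_induction_on generalizing v with
  | _ N ih =>
  by_cases hN : N ≤ 1
  · obtain ⟨i, hvi, hvsingle⟩ := card_support_eq_one.mp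
      (le_antisymm (hcard ▸ hN) (Finset.card_pos.mpr (support_nonempty_iff.mpr hv0)))
    refine ⟨i, ?_⟩
    have hscale : single i (1 : K) = (v i)⁻¹ • v := by
      rw [hvsingle, smul_single, single_eq_same, smul_eq_mul, inv_mul_cancel₀ hvi]
    exact hscale ▸ W.smul_mem _ hv
  obtain ⟨i, hi, j, hj, hij⟩ := Finset.one_lt_card.mp (hcard ▸ lt_of_not_ge hN)
  set w := T v - μ i • v with hw_def
  have hw : ∀ n, w n = (μ n - μ i) * v n := fun n => by
    rw [hw_def, sub_apply, smul_apply, hT, smul_eq_mul]; ring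
  have hsub : w.support ⊆ v.support := fun n hn => by
    rw [mem_support_iff] at hn ⊢
    exact fun hvn => hn (by rw [hw, hvn, mul_zero])
  have hwi : i ∉ w.support := by rw [notMem_support_iff, hw, sub_self, zero_mul]
  have hwj : w j ≠ 0 := by
    rw [hw]
    exact mul_ne_zero (sub_ne_zero.mpr (hμ.ne (Ne.symm hij))) (mem_support_iff.mp hj)
  have hw0 : w ≠ 0 := ne_of_apply_ne (· j) hwj
  exact ih _ (hcard ▸ Finset.card_lt_card ((Finset.ssubset_iff_of_subset hsub).mpr ⟨i, hi, hwi⟩))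
    (W.sub_mem (hW v hv) (W.smul_mem _ hv)) hw0 rfl

end Diagonal

section HeisRep

variable (q : ℤ) (α : ℂ)

theorem heisRep_single (g : ℤ × ℤ × ℤ) (m : ℤ) (x : ℂ) :
    heisRep q α g (single m x) =
      single (m + g.2.1) (x * ((q : ℂ) ^ (-g.2.2 - g.1 * (m + 1)) * α ^ g.1)) := by
  rw [heisRep, lift_apply, sum_single_index (by rw [zero_smul]), smul_smul, smul_single_one]

theorem heisRep_translate_single (b m : ℤ) (x : ℂ) :
    heisRep q α (0, b, 0) (single m x) = single (m + b) x := by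
  simp [heisRep_single]

theorem heisRep_diagonal_apply (v : ℤ →₀ ℂ) (n : ℤ) :
    heisRep q α (1, 0, 0) v n = α * (q : ℂ) ^ (-(n + 1)) * v n := by
  induction v using induction_linear with
  | zero => simp
  | add f g hf hg => rw [map_add, Finsupp.add_apply, hf, hg, Finsupp.add_apply, mul_add]
  | single m x =>
    rw [heisRep_single, add_zero, single_apply, single_apply]
    split_ifs with h
    · subst h
      simp only [zpow_one, neg_zero, zero_sub, one_mul]
      ring
    · rw [mul_zero]

theorem heisRep_eigenvalue_injective (hq : 2 ≤ q) (hα : α ≠ 0) :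
    Function.Injective fun n : ℤ => α * (q : ℂ) ^ (-(n + 1)) := by
  have hq0 : (q : ℂ) ≠ 0 := Int.cast_ne_zero.mpr (by omega)
  have hq1 : ‖(q : ℂ)‖ ≠ 1 := by
    rw [Complex.norm_intCast]
    exact_mod_cast (show |q| ≠ 1 by rw [abs_of_nonneg (by omega)]; omega)
  intro m n h
  have := zpow_right_injective_of_norm_ne_one hq0 hq1 (mul_left_cancel₀ hα h)
  simpa only [neg_inj, add_left_inj] using this

end HeisRep

/-- For every `α ≠ 0`, the representation `ρ_α` of the discrete Heisenberg group on `V` is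
irreducible: every ℂ-subspace of `V` stable under all `ρ_α(g)` is `0` or `V`. -/
theorem statement10 (q : ℤ) (hq : 2 ≤ q) (α : ℂ) (hα : α ≠ 0) :
    ∀ W : Submodule ℂ (ℤ →₀ ℂ),
      (∀ g : ℤ × ℤ × ℤ, ∀ v ∈ W, heisRep q α g v ∈ W) → W = ⊥ ∨ W = ⊤ := by
  intro W hW
  refine or_iff_not_imp_left.mpr fun hW0 => ?_
  obtain ⟨v, hv, hv0⟩ := Submodule.exists_mem_ne_zero_of_ne_bot hW0
  obtain ⟨m, hm⟩ := exists_single_one_mem_of_invariant_of_diagonal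
    (heisRep_eigenvalue_injective q α hq hα) (heisRep_diagonal_apply q α) (hW (1, 0, 0)) hv hv0
  rw [eq_top_iff, ← (Finsupp.basisSingleOne : Module.Basis ℤ ℂ _).span_eq, Submodule.span_le]
  rintro _ ⟨n, rfl⟩
  simpa [heisRep_translate_single] using hW (0, n - m, 0) _ hm
end

section
/- For every d ∈ ℤ, the map R_d : G → G defined by R_d(a,b,c) = (a + d·b, b, c + b(b−1)d/2) is a group automorphism of the discrete Heisenberg group G, and d ↦ R_d is a group homomorphism from ℤ to Aut(G): R_0 = id and R_{d₁+d₂} = R_{d₁} ∘ R_{d₂} for all d₁, d₂ ∈ ℤ. -/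
/-- The map `R_d : G → G`, `R_d(a,b,c) = (a + d·b, b, c + b(b−1)d/2)` (note that
`b(b−1)d/2` is an exact integer division since `b(b−1)` is even). -/
def heisAut (d : ℤ) (x : ℤ × ℤ × ℤ) : ℤ × ℤ × ℤ :=
  (x.1 + d * x.2.1, x.2.1, x.2.2 + x.2.1 * (x.2.1 - 1) * d / 2)

lemma Int.mul_sub_one_mul_ediv_two (b d : ℤ) : b * (b - 1) * d / 2 = b * (b - 1) / 2 * d :=
  Int.mul_ediv_assoc' d (Int.even_mul_pred_self b).two_dvd

lemma Int.add_mul_add_sub_one_ediv_two (b b' : ℤ) :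
    (b + b') * (b + b' - 1) / 2 = b * (b - 1) / 2 + b' * (b' - 1) / 2 + b * b' := by
  have hb := Int.ediv_mul_cancel (Int.even_mul_pred_self b).two_dvd
  have hb' := Int.ediv_mul_cancel (Int.even_mul_pred_self b').two_dvd
  have hsum := Int.ediv_mul_cancel (Int.even_mul_pred_self (b + b')).two_dvd
  refine mul_right_cancel₀ two_ne_zero ?_
  linear_combination hsum - hb - hb'

lemma heisAut_eq (d a b c : ℤ) :
    heisAut d (a, b, c) = (a + d * b, b, c + b * (b - 1) / 2 * d) := by
  rw [heisAut, Int.mul_sub_one_mul_ediv_two]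

lemma heisAut_hmul (d : ℤ) (x y : ℤ × ℤ × ℤ) :
    heisAut d (hmul x y) = hmul (heisAut d x) (heisAut d y) := by
  obtain ⟨a, b, c⟩ := x
  obtain ⟨a', b', c'⟩ := y
  simp only [hmul, heisAut_eq, Int.add_mul_add_sub_one_ediv_two, Prod.mk.injEq]
  exact ⟨by ring, trivial, by ring⟩

lemma heisAut_zero : heisAut 0 = id := by
  funext ⟨a, b, c⟩
  simp [heisAut_eq]

lemma heisAut_add (d₁ d₂ : ℤ) : heisAut (d₁ + d₂) = heisAut d₁ ∘ heisAut d₂ := by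
  funext ⟨a, b, c⟩
  simp only [Function.comp_apply, heisAut_eq, Prod.mk.injEq]
  exact ⟨by ring, trivial, by ring⟩

lemma heisAut_leftInverse_neg (d : ℤ) : Function.LeftInverse (heisAut (-d)) (heisAut d) := by
  intro x
  rw [← Function.comp_apply (f := heisAut (-d)), ← heisAut_add, neg_add_cancel, heisAut_zero, id]

lemma heisAut_bijective (d : ℤ) : Function.Bijective (heisAut d) :=
  ⟨(heisAut_leftInverse_neg d).injective, by
    simpa using (heisAut_leftInverse_neg (-d)).surjective⟩

/-- Each `R_d` is a group automorphism of the discrete Heisenberg group, and `d ↦ R_d` is a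
group homomorphism `ℤ → Aut(G)`: `R_0 = id` and `R_{d₁+d₂} = R_{d₁} ∘ R_{d₂}`. -/
theorem statement12 :
    (∀ d : ℤ, Function.Bijective (heisAut d)) ∧
    (∀ d : ℤ, ∀ x y : ℤ × ℤ × ℤ,
      heisAut d (hmul x y) = hmul (heisAut d x) (heisAut d y)) ∧
    heisAut 0 = id ∧
    (∀ d₁ d₂ : ℤ, heisAut (d₁ + d₂) = heisAut d₁ ∘ heisAut d₂) :=
  ⟨heisAut_bijective, heisAut_hmul, heisAut_zero, heisAut_add⟩
end

section
/- The map M sending (a,b,c,d) ∈ ℤ⁴ to the 4×4 integer matrix with rows (1, d, a, c), (0, 1, b, b(b−1)/2), (0, 0, 1, b), (0, 0, 0, 1) is injective and multiplicative for the extended group law: M(x ⋆ y) = M(x)·M(y) for all x, y ∈ ℤ⁴, where ⋆ denotes the multiplication of G̃; in particular each M(x) is an invertible (unipotent upper triangular) matrix and M realizes G̃ as a subgroup of GL(4,ℤ). -/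
/-- Multiplication of the extended group `G̃ = Heis(3,ℤ) ⋊ ℤ` on `ℤ⁴`:
`(a₁,b₁,c₁,d₁) ⋆ (a₂,b₂,c₂,d₂) =
  (a₁+a₂+d₁·b₂, b₁+b₂, c₁+c₂+b₂(b₂−1)d₁/2 + a₁·b₂, d₁+d₂)`
(the division by `2` is exact since `b₂(b₂−1)` is even). -/
def tmul (x y : ℤ × ℤ × ℤ × ℤ) : ℤ × ℤ × ℤ × ℤ :=
  (x.1 + y.1 + x.2.2.2 * y.2.1, x.2.1 + y.2.1,
    x.2.2.1 + y.2.2.1 + y.2.1 * (y.2.1 - 1) * x.2.2.2 / 2 + x.1 * y.2.1,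
    x.2.2.2 + y.2.2.2)

/-- The matrix realization of `G̃`: `(a,b,c,d)` goes to the unipotent upper triangular
matrix with rows `(1,d,a,c)`, `(0,1,b,b(b−1)/2)`, `(0,0,1,b)`, `(0,0,0,1)`. -/
def matRep (x : ℤ × ℤ × ℤ × ℤ) : Matrix (Fin 4) (Fin 4) ℤ :=
  !![1, x.2.2.2, x.1, x.2.2.1;
     0, 1, x.2.1, x.2.1 * (x.2.1 - 1) / 2;
     0, 0, 1, x.2.1;
     0, 0, 0, 1]

/-! Multiplicativity is an entrywise computation. The only non-polynomial entry is
`b(b-1)/2 = C(b,2)`, and it reduces to `C(p+q,2) = C(p,2) + pq + C(q,2)` once one knows that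
the division by `2` is exact. -/

theorem Int.mul_pred_mul_ediv_two (b d : ℤ) : b * (b - 1) * d / 2 = d * (b * (b - 1) / 2) := by
  rw [mul_comm, Int.mul_ediv_assoc _ (Int.even_mul_pred_self b).two_dvd]

theorem Int.add_mul_pred_ediv_two (p q : ℤ) :
    (p + q) * (p + q - 1) / 2 = p * (p - 1) / 2 + p * q + q * (q - 1) / 2 := by
  obtain ⟨k, hk⟩ := (Int.even_mul_pred_self p).two_dvd
  obtain ⟨l, hl⟩ := (Int.even_mul_pred_self q).two_dvd
  have hsum : (p + q) * (p + q - 1) = 2 * (k + p * q + l) := by linear_combination hk + hl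
  simp only [hsum, hk, hl, Int.mul_ediv_cancel_left _ two_ne_zero]

theorem matRep_tmul (x y : ℤ × ℤ × ℤ × ℤ) : matRep (tmul x y) = matRep x * matRep y := by
  obtain ⟨a₁, b₁, c₁, d₁⟩ := x
  obtain ⟨a₂, b₂, c₂, d₂⟩ := y
  ext i j
  fin_cases i <;> fin_cases j <;>
    simp [matRep, tmul, Matrix.mul_apply, Fin.sum_univ_four, Int.mul_pred_mul_ediv_two,
      Int.add_mul_pred_ediv_two] <;> ring

def matRepEntries (M : Matrix (Fin 4) (Fin 4) ℤ) : ℤ × ℤ × ℤ × ℤ := (M 0 2, M 2 3, M 0 3, M 0 1)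

theorem leftInverse_matRepEntries_matRep : Function.LeftInverse matRepEntries matRep := fun _ => rfl

theorem det_matRep (x : ℤ × ℤ × ℤ × ℤ) : (matRep x).det = 1 := by
  simp [matRep, Matrix.det_succ_row_zero, Fin.sum_univ_succ]

/-- The map `M` is injective and multiplicative, `M(x ⋆ y) = M(x)·M(y)`, and each `M(x)` is
an invertible matrix; hence `M` realizes `G̃` as a subgroup of `GL(4,ℤ)`. -/
theorem statement13 :
    Function.Injective matRep ∧
    (∀ x y : ℤ × ℤ × ℤ × ℤ, matRep (tmul x y) = matRep x * matRep y) ∧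
    (∀ x : ℤ × ℤ × ℤ × ℤ, IsUnit (matRep x)) :=
  ⟨leftInverse_matRepEntries_matRep.injective, matRep_tmul,
    fun x => (Matrix.isUnit_iff_isUnit_det _).mpr (by simp [det_matRep])⟩
end

section
/- The set ℤ⁴ with the multiplication ⋆ is a group, and this group G̃ is nilpotent of nilpotency class exactly 3: the fourth term of its lower central series is trivial while the third term is nontrivial (indeed for x = (0,0,0,1), y = (0,1,0,0) one has [x,y] = (1,0,−1,0) and [[x,y],y] = (0,0,1,0) ≠ identity). -/
/-- The inverse for `⋆`: `(a,b,c,d)⁻¹ = (d·b − a, −b, a·b − c − b(b+1)d/2, −d)`. -/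
def tinv (x : ℤ × ℤ × ℤ × ℤ) : ℤ × ℤ × ℤ × ℤ :=
  (x.2.2.2 * x.2.1 - x.1, -x.2.1,
    x.1 * x.2.1 - x.2.2.1 - x.2.1 * (x.2.1 + 1) * x.2.2.2 / 2, -x.2.2.2)

/-- The commutator `[x,y] = x ⋆ y ⋆ x⁻¹ ⋆ y⁻¹` in `G̃`. -/
def tbrk (x y : ℤ × ℤ × ℤ × ℤ) : ℤ × ℤ × ℤ × ℤ :=
  tmul (tmul (tmul x y) (tinv x)) (tinv y)

namespace Int

theorem two_mul_mul_pred_ediv_two (b : ℤ) : 2 * (b * (b - 1) / 2) = b * (b - 1) :=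
  two_mul_ediv_two_of_even (even_mul_pred_self b)

theorem mul_pred_mul_ediv_two_s14 (b d : ℤ) : b * (b - 1) * d / 2 = b * (b - 1) / 2 * d :=
  Int.mul_ediv_assoc' d (even_iff_two_dvd.mp (even_mul_pred_self b))

theorem mul_succ_mul_ediv_two (b d : ℤ) :
    b * (b + 1) * d / 2 = (b + 1) * (b + 1 - 1) / 2 * d := by
  rw [← mul_pred_mul_ediv_two_s14]
  ring_nf

theorem add_mul_pred_ediv_two_s14 (b c : ℤ) :
    (b + c) * (b + c - 1) / 2 = b * (b - 1) / 2 + c * (c - 1) / 2 + b * c := by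
  linarith [two_mul_mul_pred_ediv_two (b + c), two_mul_mul_pred_ediv_two b,
    two_mul_mul_pred_ediv_two c]

theorem neg_mul_pred_ediv_two (b : ℤ) : -b * (-b - 1) / 2 = b * (b - 1) / 2 + b := by
  linarith [two_mul_mul_pred_ediv_two (-b), two_mul_mul_pred_ediv_two b]

end Int

open Int

theorem tmul_assoc (x y z : ℤ × ℤ × ℤ × ℤ) : tmul (tmul x y) z = tmul x (tmul y z) := by
  obtain ⟨a₁, b₁, c₁, d₁⟩ := x
  obtain ⟨a₂, b₂, c₂, d₂⟩ := y
  obtain ⟨a₃, b₃, c₃, d₃⟩ := z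
  simp only [tmul, Prod.mk.injEq, mul_pred_mul_ediv_two_s14, add_mul_pred_ediv_two_s14]
  exact ⟨by ring, by ring, by ring, by ring⟩

theorem zero_tmul (x : ℤ × ℤ × ℤ × ℤ) : tmul (0, 0, 0, 0) x = x := by
  simp [tmul]

theorem tmul_zero (x : ℤ × ℤ × ℤ × ℤ) : tmul x (0, 0, 0, 0) = x := by
  simp [tmul]

theorem tmul_tinv (x : ℤ × ℤ × ℤ × ℤ) :
    tmul x (tinv x) = (0, 0, 0, 0) ∧ tmul (tinv x) x = (0, 0, 0, 0) := by
  obtain ⟨a, b, c, d⟩ := x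
  simp only [tmul, tinv, Prod.mk.injEq, mul_pred_mul_ediv_two_s14, mul_succ_mul_ediv_two,
    add_mul_pred_ediv_two_s14, neg_mul_pred_ediv_two]
  norm_num
  exact ⟨by ring, by linear_combination (-d) * two_mul_mul_pred_ediv_two b⟩

theorem tbrk_eq_mk (x y : ℤ × ℤ × ℤ × ℤ) :
    tbrk x y = ((tbrk x y).1, 0, (tbrk x y).2.2.1, 0) := by
  obtain ⟨a₁, b₁, c₁, d₁⟩ := x
  obtain ⟨a₂, b₂, c₂, d₂⟩ := y
  simp only [tbrk, tmul, tinv, Prod.mk.injEq]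
  exact ⟨trivial, by ring, trivial, by ring⟩

theorem tbrk_mk_zero_mk_zero (A C : ℤ) (z : ℤ × ℤ × ℤ × ℤ) :
    tbrk (A, 0, C, 0) z = (0, 0, A * z.2.1, 0) := by
  obtain ⟨a, b, c, d⟩ := z
  simp only [tbrk, tmul, tinv, Prod.mk.injEq, mul_pred_mul_ediv_two_s14, mul_succ_mul_ediv_two,
    add_mul_pred_ediv_two_s14, neg_mul_pred_ediv_two]
  norm_num
  ring_nf

theorem tbrk_central (C : ℤ) (w : ℤ × ℤ × ℤ × ℤ) : tbrk (0, 0, C, 0) w = (0, 0, 0, 0) := by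
  simp [tbrk_mk_zero_mk_zero]

/-- `(ℤ⁴, ⋆)` is a group (associative, with identity `(0,0,0,0)` and two-sided inverses),
and this group `G̃` is nilpotent of class exactly `3`: all quadruple commutators are trivial
(the fourth term of the lower central series vanishes), while for `x = (0,0,0,1)`,
`y = (0,1,0,0)` one has `[x,y] = (1,0,−1,0)` and `[[x,y],y] = (0,0,1,0) ≠ identity`, so the
third term is nontrivial. -/
theorem statement14 :
    (∀ x y z : ℤ × ℤ × ℤ × ℤ, tmul (tmul x y) z = tmul x (tmul y z)) ∧
    (∀ x : ℤ × ℤ × ℤ × ℤ, tmul (0, 0, 0, 0) x = x ∧ tmul x (0, 0, 0, 0) = x) ∧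
    (∀ x : ℤ × ℤ × ℤ × ℤ,
      tmul x (tinv x) = (0, 0, 0, 0) ∧ tmul (tinv x) x = (0, 0, 0, 0)) ∧
    (∀ x y z w : ℤ × ℤ × ℤ × ℤ, tbrk (tbrk (tbrk x y) z) w = (0, 0, 0, 0)) ∧
    tbrk (0, 0, 0, 1) (0, 1, 0, 0) = (1, 0, -1, 0) ∧
    tbrk (tbrk (0, 0, 0, 1) (0, 1, 0, 0)) (0, 1, 0, 0) = (0, 0, 1, 0) ∧
    ((0, 0, 1, 0) : ℤ × ℤ × ℤ × ℤ) ≠ (0, 0, 0, 0) := by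
  refine ⟨tmul_assoc, fun x => ⟨zero_tmul x, tmul_zero x⟩, tmul_tinv, ?_, by decide, by decide,
    by decide⟩
  intro x y z w
  rw [tbrk_eq_mk x y, tbrk_mk_zero_mk_zero, tbrk_central]
end

section
/- Let q ≥ 2 be an integer, α ∈ ℂ with α ≠ 0, a, c ∈ ℤ, and d ≥ 1 an integer. Define tr_β(a,0,c,d) = q^{−c−a}·β^a·Σ_{l∈ℤ} q^{−a·l − d·l(l+1)/2}·β^{d·l} for β ∈ ℂ* (the series converges absolutely). Then tr_{q·α}(a,0,c,d) = α^d · tr_α(a,0,c,d). -/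
/-!
Replacing `β` by `q·β` multiplies the `l`-th term of the series by `q^(d·l)`. Since
`(l+1)(l+2)/2 = l(l+1)/2 + (l+1)`, this factor is absorbed by shifting the summation index
`l ↦ l + 1`, at the cost of the constant `q^(-a)·β^d`; the `q^(-a)` cancels the `q^a` coming from
the prefactor `(q·β)^a`.
-/

/-- The trace `tr_β(a,0,c,d)` of the element `(a,0,c,d)` of the extended group `G̃` on the
representation `ρ̃_β`, with respect to the distinguished basis `(Δ_l)_{l∈ℤ}`:
`tr_β(a,0,c,d) = q^{−c−a}·β^a·Σ_{l∈ℤ} q^{−a·l − d·l(l+1)/2}·β^{d·l}`. -/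
noncomputable def trBeta (q a c d : ℤ) (β : ℂ) : ℂ :=
  (q : ℂ) ^ (-c - a) * β ^ a *
    ∑' l : ℤ, (q : ℂ) ^ (-(a * l) - d * (l * (l + 1) / 2)) * β ^ (d * l)

theorem Int.succ_mul_succ_succ_div_two (m : ℤ) :
    (m + 1) * (m + 1 + 1) / 2 = m * (m + 1) / 2 + (m + 1) := by
  rw [show (m + 1) * (m + 1 + 1) = m * (m + 1) + (m + 1) * 2 by ring,
    Int.add_mul_ediv_right _ _ two_ne_zero]

section ThetaSeries

variable {K : Type*} [Field K]

theorem theta_term_mul_succ {q β : K} (hq : q ≠ 0) (hβ : β ≠ 0) (a d m : ℤ) :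
    q ^ (-(a * (m + 1)) - d * ((m + 1) * (m + 1 + 1) / 2)) * (q * β) ^ (d * (m + 1)) =
      q ^ (-a) * β ^ d * (q ^ (-(a * m) - d * (m * (m + 1) / 2)) * β ^ (d * m)) := by
  have hexp : -(a * (m + 1)) - d * ((m + 1) * (m + 1 + 1) / 2) + d * (m + 1) =
      -a + (-(a * m) - d * (m * (m + 1) / 2)) := by
    rw [Int.succ_mul_succ_succ_div_two]; ring
  have hq' : q ^ (-(a * (m + 1)) - d * ((m + 1) * (m + 1 + 1) / 2)) * q ^ (d * (m + 1)) =
      q ^ (-a) * q ^ (-(a * m) - d * (m * (m + 1) / 2)) := by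
    rw [← zpow_add₀ hq, hexp, zpow_add₀ hq]
  have hβ' : β ^ (d * (m + 1)) = β ^ d * β ^ (d * m) := by
    rw [← zpow_add₀ hβ]; ring_nf
  rw [mul_zpow, ← mul_assoc, hq', hβ']
  ring

variable [TopologicalSpace K] [IsTopologicalRing K] [T2Space K]

theorem tsum_theta_mul_left {q β : K} (hq : q ≠ 0) (hβ : β ≠ 0) (a d : ℤ) :
    ∑' l : ℤ, q ^ (-(a * l) - d * (l * (l + 1) / 2)) * (q * β) ^ (d * l) =
      q ^ (-a) * β ^ d * ∑' l : ℤ, q ^ (-(a * l) - d * (l * (l + 1) / 2)) * β ^ (d * l) := by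
  rw [← tsum_mul_left, ← (Equiv.addRight (1 : ℤ)).tsum_eq]
  exact tsum_congr fun m => theta_term_mul_succ hq hβ a d m

end ThetaSeries

theorem statement18_general (q : ℤ) (hq : 2 ≤ q) (α : ℂ) (hα : α ≠ 0) (a c d : ℤ) :
    trBeta q a c d ((q : ℂ) * α) = α ^ d * trBeta q a c d α := by
  have hq0 : (q : ℂ) ≠ 0 := by exact_mod_cast (by omega : q ≠ 0)
  unfold trBeta
  rw [tsum_theta_mul_left hq0 hα, mul_zpow, zpow_neg]
  field_simp

/-- For `q ≥ 2`, `α ≠ 0`, `a, c ∈ ℤ` and `d ≥ 1`: `tr_{q·α}(a,0,c,d) = α^d·tr_α(a,0,c,d)`. -/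
theorem statement18 (q : ℤ) (hq : 2 ≤ q) (α : ℂ) (hα : α ≠ 0) (a c d : ℤ) (hd : 1 ≤ d) :
    trBeta q a c d ((q : ℂ) * α) = α ^ d * trBeta q a c d α :=
  statement18_general q hq α hα a c d
end

section
/- For every α ∈ ℂ with α ≠ 0, the representation ρ̃_α of the extended group G̃ on V is irreducible: every ℂ-subspace of V stable under ρ̃_α(x) for all x ∈ G̃ is either 0 or all of V. -/
/-!
`ρ̃_α(1,0,0,0)` is diagonal in the basis `Δ_l`, with eigenvalues `q^{-(l+1)} α` that are pairwise
distinct because `q ≥ 2` and `α ≠ 0`. Applying a suitable polynomial in it to a nonzero vector of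
an invariant subspace isolates one basis vector `Δ_l`, and the translations `ρ̃_α(0,b,0,0)` carry
`Δ_l` to every other `Δ_m`.
-/

/-- The operator `ρ̃_α(a,b,c,d)` on the space `V = ℤ →₀ ℂ` of finitely supported
functions, defined on the standard basis by
`ρ̃_α(a,b,c,d)(Δ_l) = q^{−c−a(l+1)−d·l(l+1)/2}·α^{a+d·l}·Δ_{l+b}`. -/
noncomputable def extRep (q : ℤ) (α : ℂ) (x : ℤ × ℤ × ℤ × ℤ) :
    (ℤ →₀ ℂ) →ₗ[ℂ] (ℤ →₀ ℂ) :=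
  Finsupp.lift (ℤ →₀ ℂ) ℂ ℤ fun l =>
    ((q : ℂ) ^ (-x.2.2.1 - x.1 * (l + 1) - x.2.2.2 * (l * (l + 1) / 2)) *
        α ^ (x.1 + x.2.2.2 * l)) • Finsupp.single (l + x.2.1) (1 : ℂ)

open Polynomial Finsupp

section DiagonalOperator

variable {K ι : Type*} [Field K] {f : Module.End K (ι →₀ K)} {μ : ι → K}

theorem aeval_apply_of_apply_single (hf : ∀ i, f (single i 1) = μ i • single i 1)
    (p : K[X]) (v : ι →₀ K) (k : ι) : aeval f p v k = p.eval (μ k) * v k := by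
  induction v using Finsupp.induction_linear with
  | zero => simp
  | add v w hv hw => simp [hv, hw, mul_add]
  | single i c =>
    have hsingle : single i c = c • single i (1 : K) := by simp
    rw [hsingle, map_smul, Module.End.aeval_apply_of_mem_apply_eq_smul (hf i)]
    by_cases hk : i = k
    · subst hk; simp [mul_comm]
    · simp [hk]

/-- Lagrange interpolation: the polynomial vanishing at the eigenvalues `μ j` of the other
support points of `v` maps `v` to a nonzero multiple of `single i 1`. -/
theorem single_mem_of_apply_single (hf : ∀ i, f (single i 1) = μ i • single i 1)
    (hμ : Function.Injective μ) {W : Submodule K (ι →₀ K)} (hW : W ≤ W.comap f)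
    {v : ι →₀ K} (hv : v ∈ W) {i : ι} (hi : i ∈ v.support) : single i 1 ∈ W := by
  classical
  set p : K[X] := ∏ j ∈ v.support.erase i, (X - C (μ j))
  have hpv : aeval f p v = (p.eval (μ i) * v i) • single i 1 := by
    ext k
    rw [aeval_apply_of_apply_single hf]
    by_cases hki : k = i
    · subst hki; simp
    by_cases hk : k ∈ v.support
    · have hroot : p.eval (μ k) = 0 := by
        simp only [p, eval_prod, eval_sub, eval_X, eval_C]
        exact Finset.prod_eq_zero (Finset.mem_erase.mpr ⟨hki, hk⟩) (sub_self _)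
      simp [hroot, Ne.symm hki]
    · simp [notMem_support_iff.mp hk, Ne.symm hki]
  have hc : p.eval (μ i) * v i ≠ 0 := by
    refine mul_ne_zero ?_ (mem_support_iff.mp hi)
    simp only [p, eval_prod, eval_sub, eval_X, eval_C]
    exact Finset.prod_ne_zero_iff.mpr fun j hj =>
      sub_ne_zero.mpr (hμ.ne (Finset.ne_of_mem_erase hj).symm)
  have hmem : aeval f p v ∈ W := aeval_apply_smul_mem_of_le_comap hv p f hW
  rw [hpv] at hmem
  simpa only [smul_smul, inv_mul_cancel₀ hc, one_smul] using
    W.smul_mem (p.eval (μ i) * v i)⁻¹ hmem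

end DiagonalOperator

theorem extRep_single (q : ℤ) (α : ℂ) (x : ℤ × ℤ × ℤ × ℤ) (l : ℤ) :
    extRep q α x (single l 1) =
      ((q : ℂ) ^ (-x.2.2.1 - x.1 * (l + 1) - x.2.2.2 * (l * (l + 1) / 2)) *
        α ^ (x.1 + x.2.2.2 * l)) • single (l + x.2.1) 1 := by
  simp [extRep]

theorem extRep_translate_single (q : ℤ) (α : ℂ) (b l : ℤ) :
    extRep q α (0, b, 0, 0) (single l 1) = single (l + b) 1 := by
  simp [extRep_single]

theorem extRep_diagonal_single (q : ℤ) (α : ℂ) (l : ℤ) :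
    extRep q α (1, 0, 0, 0) (single l 1) = ((q : ℂ) ^ (-(l + 1)) * α) • single l 1 := by
  simp [extRep_single]

theorem zpow_neg_add_one_mul_injective (q : ℤ) (hq : 2 ≤ q) {α : ℂ} (hα : α ≠ 0) :
    Function.Injective fun l : ℤ => (q : ℂ) ^ (-(l + 1)) * α := by
  intro m n h
  have hq1 : (1 : ℝ) < q := by exact_mod_cast hq
  have hnorm := congrArg norm (mul_right_cancel₀ hα h)
  simp only [norm_zpow, Complex.norm_intCast, abs_of_pos (by linarith : (0 : ℝ) < q)] at hnorm
  have := zpow_right_injective₀ (by linarith) hq1.ne' hnorm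
  omega

/-- For every `α ≠ 0`, the representation `ρ̃_α` of the extended group `G̃` on `V` is
irreducible: every ℂ-subspace of `V` stable under all `ρ̃_α(x)` is `0` or `V`. -/
theorem statement19 (q : ℤ) (hq : 2 ≤ q) (α : ℂ) (hα : α ≠ 0) :
    ∀ W : Submodule ℂ (ℤ →₀ ℂ),
      (∀ x : ℤ × ℤ × ℤ × ℤ, ∀ v ∈ W, extRep q α x v ∈ W) → W = ⊥ ∨ W = ⊤ := by
  intro W hW
  refine or_iff_not_imp_left.mpr fun hbot => ?_
  obtain ⟨v, hvW, hv⟩ := (Submodule.ne_bot_iff W).mp hbot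
  obtain ⟨l₀, hl₀⟩ := support_nonempty_iff.mpr hv
  have hsingle : single l₀ 1 ∈ W :=
    single_mem_of_apply_single (extRep_diagonal_single q α) (zpow_neg_add_one_mul_injective q hq hα)
      (fun v hv => hW _ v hv) hvW hl₀
  have hall : ∀ l : ℤ, single l (1 : ℂ) ∈ W := fun l => by
    simpa [extRep_translate_single] using hW (0, l - l₀, 0, 0) _ hsingle
  rw [eq_top_iff, ← (Finsupp.basisSingleOne (R := ℂ) (ι := ℤ)).span_eq, Submodule.span_le]
  rintro _ ⟨l, rfl⟩
  simpa using hall l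
end
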